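/- arXiv:1604.02410 — 8 statements merged into one kernel-verified Lean document; each statement's English description precedes it below -/
import Mathlib

section
/- Let f(x) = x^4 + a2*x^2 + a1*x + a0 be a monic quartic polynomial over a field k of characteristic 0 with roots r0, r1, r2, r3 (in an algebraic closure). Define s1 = (r0 - r1 + r2 - r3)/2, s2 = (r0 + r1 - r2 - r3)/2, s3 = (r0 - r1 - r2 + r3)/2. Then s1^2, s2^2, s3^2 are exactly the roots of the cubic resolvent g(x) = x^3 + 2*a2*x^2 + (a2^2 - 4*a0)*x - a1^2. -/
/-- The roots of the cubic resolvent of a depressed quartic. -/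
theorem cubic_resolvent_roots
    (K : Type*) [Field K] [CharZero K]
    (a2 a1 a0 r0 r1 r2 r3 : K)
    (hf : ∀ x : K, x ^ 4 + a2 * x ^ 2 + a1 * x + a0 =
      (x - r0) * (x - r1) * (x - r2) * (x - r3))
    (s1 s2 s3 : K)
    (hs1 : s1 = (r0 - r1 + r2 - r3) / 2)
    (hs2 : s2 = (r0 + r1 - r2 - r3) / 2)
    (hs3 : s3 = (r0 - r1 - r2 + r3) / 2) :
    ∀ x : K, x ^ 3 + 2 * a2 * x ^ 2 + (a2 ^ 2 - 4 * a0) * x - a1 ^ 2 =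
      (x - s1 ^ 2) * (x - s2 ^ 2) * (x - s3 ^ 2) := by
  have ha0 : a0 = r0 * r1 * r2 * r3 := by linear_combination hf 0
  have ha2 : a2 = r0 * r1 + r0 * r2 + r0 * r3 + r1 * r2 + r1 * r3 + r2 * r3 := by
    linear_combination (hf 1 + hf (-1)) / 2 - hf 0
  have ha1 : a1 = -(r0 * r1 * r2 + r0 * r1 * r3 + r0 * r2 * r3 + r1 * r2 * r3) := by
    linear_combination (2 / 3 : K) * (hf 1 - hf (-1)) - (hf 2 - hf (-2)) / 12
  have hsum : r3 = -(r0 + r1 + r2) := by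
    linear_combination (hf 2 - hf (-2)) / 12 - (hf 1 - hf (-1)) / 6
  intro x
  subst hs1 hs2 hs3 ha0 ha2 ha1 hsum
  ring
end

section
/- The Klein quartic x^3 y + y^3 z + z^3 x = 0 defines a smooth projective plane curve over any field of characteristic not equal to 7. -/
/-- The Klein quartic `x^3 y + y^3 z + z^3 x = 0` is a smooth plane curve in
characteristic different from 7: the polynomial and its partial derivatives
have no common projective zero over an algebraic closure. -/
theorem klein_quartic_smooth
    (K : Type*) [Field K] [IsAlgClosed K] (h7 : (7 : K) ≠ 0) :
    ¬ ∃ x y z : K, (x, y, z) ≠ (0, 0, 0) ∧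
      x ^ 3 * y + y ^ 3 * z + z ^ 3 * x = 0 ∧
      3 * x ^ 2 * y + z ^ 3 = 0 ∧
      x ^ 3 + 3 * y ^ 2 * z = 0 ∧
      y ^ 3 + 3 * z ^ 2 * x = 0 := by
  rintro ⟨x, y, z, hne, hF, h1, h2, h3⟩
  -- If x = 0 then y = 0 (from h3) and z = 0 (from h1), contradiction.
  have hx : x ≠ 0 := by
    rintro rfl
    have hy : y = 0 := by
      have : y ^ 3 = 0 := by linear_combination h3
      exact pow_eq_zero_iff (by norm_num) |>.mp this
    have hz : z = 0 := by
      have : z ^ 3 = 0 := by linear_combination h1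
      exact pow_eq_zero_iff (by norm_num) |>.mp this
    exact hne (by simp [hy, hz])
  have hy : y ≠ 0 := by
    rintro rfl
    have hz : z = 0 := by
      have : z ^ 3 = 0 := by linear_combination h1
      exact pow_eq_zero_iff (by norm_num) |>.mp this
    have hx0 : x = 0 := by
      have : x ^ 3 = 0 := by linear_combination h2
      exact pow_eq_zero_iff (by norm_num) |>.mp this
    exact hx hx0
  have key : (7 : K) * (x ^ 3 * y) = 0 := by
    linear_combination y * h2 - 3 * hF + 3 * x * h1
  have : x ^ 3 * y ≠ 0 := mul_ne_zero (pow_ne_zero _ hx) hy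
  exact this ((mul_eq_zero.mp key).resolve_left h7)
end

section
/- Let ζ = ζ7 be a primitive 7th root of unity over a field of characteristic 0 and ε = -1/√(-7) where √(-7) = ζ + ζ^2 + ζ^4 - ζ^3 - ζ^5 - ζ^6. The matrix α1 = ε · [[ζ-ζ^6, ζ^2-ζ^5, ζ^4-ζ^3],[ζ^2-ζ^5, ζ^4-ζ^3, ζ-ζ^6],[ζ^4-ζ^3, ζ-ζ^6, ζ^2-ζ^5]] and the matrix α3 = diag(ζ^4, ζ^2, ζ) each preserve the Klein quartic: substituting them into F(x,y,z) = x^3 y + y^3 z + z^3 x yields a scalar multiple of F. -/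
/-- The matrices `α₁` and `α₃ = diag(ζ⁴, ζ², ζ)` preserve the Klein quartic
`x³y + y³z + z³x`, where `ζ` is a primitive 7th root of unity and
`ε = -1/√-7` with `√-7 = ζ+ζ²+ζ⁴-ζ³-ζ⁵-ζ⁶`. -/
theorem klein_quartic_automorphisms
    (K : Type*) [Field K] [CharZero K]
    (ζ : K) (hζ : IsPrimitiveRoot ζ 7)
    (s7 ε : K)
    (hs7 : s7 = ζ + ζ ^ 2 + ζ ^ 4 - ζ ^ 3 - ζ ^ 5 - ζ ^ 6)
    (hε : ε = -1 / s7) :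
    (∃ c : K, c ≠ 0 ∧ ∀ x y z : K,
      (ε * ((ζ - ζ ^ 6) * x + (ζ ^ 2 - ζ ^ 5) * y + (ζ ^ 4 - ζ ^ 3) * z)) ^ 3 *
          (ε * ((ζ ^ 2 - ζ ^ 5) * x + (ζ ^ 4 - ζ ^ 3) * y + (ζ - ζ ^ 6) * z)) +
        (ε * ((ζ ^ 2 - ζ ^ 5) * x + (ζ ^ 4 - ζ ^ 3) * y + (ζ - ζ ^ 6) * z)) ^ 3 *
          (ε * ((ζ ^ 4 - ζ ^ 3) * x + (ζ - ζ ^ 6) * y + (ζ ^ 2 - ζ ^ 5) * z)) +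
        (ε * ((ζ ^ 4 - ζ ^ 3) * x + (ζ - ζ ^ 6) * y + (ζ ^ 2 - ζ ^ 5) * z)) ^ 3 *
          (ε * ((ζ - ζ ^ 6) * x + (ζ ^ 2 - ζ ^ 5) * y + (ζ ^ 4 - ζ ^ 3) * z)) =
        c * (x ^ 3 * y + y ^ 3 * z + z ^ 3 * x)) ∧
    (∃ c : K, c ≠ 0 ∧ ∀ x y z : K,
      (ζ ^ 4 * x) ^ 3 * (ζ ^ 2 * y) + (ζ ^ 2 * y) ^ 3 * (ζ * z) +
          (ζ * z) ^ 3 * (ζ ^ 4 * x) =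
        c * (x ^ 3 * y + y ^ 3 * z + z ^ 3 * x)) := by
  have h7 : ζ ^ 7 = 1 := hζ.pow_eq_one
  have hsum : 1 + ζ + ζ ^ 2 + ζ ^ 3 + ζ ^ 4 + ζ ^ 5 + ζ ^ 6 = 0 := by
    have h := hζ.geom_sum_eq_zero (by norm_num)
    simp [Finset.sum_range_succ] at h
    linear_combination h
  have hs7sq : s7 ^ 2 = -7 := by
    rw [hs7]
    linear_combination (7 + (-7)*ζ + ζ^2 + ζ^3 + (-3)*ζ^4 + ζ^5 + ζ^6) * hsum
  have hs7ne : s7 ≠ 0 := by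
    intro h
    rw [h] at hs7sq
    norm_num at hs7sq
  have hs4 : s7 ^ 4 = 49 := by
    have : s7 ^ 4 = (s7 ^ 2) ^ 2 := by ring
    rw [this, hs7sq]; norm_num
  have hε4 : ε ^ 4 = 1 / 49 := by
    rw [hε, div_pow, hs4]
    norm_num
  refine ⟨⟨1, one_ne_zero, fun x y z => ?_⟩, ⟨1, one_ne_zero, fun x y z => ?_⟩⟩
  · linear_combination
      (((ζ - ζ ^ 6) * x + (ζ ^ 2 - ζ ^ 5) * y + (ζ ^ 4 - ζ ^ 3) * z) ^ 3 *
          ((ζ ^ 2 - ζ ^ 5) * x + (ζ ^ 4 - ζ ^ 3) * y + (ζ - ζ ^ 6) * z) +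
        ((ζ ^ 2 - ζ ^ 5) * x + (ζ ^ 4 - ζ ^ 3) * y + (ζ - ζ ^ 6) * z) ^ 3 *
          ((ζ ^ 4 - ζ ^ 3) * x + (ζ - ζ ^ 6) * y + (ζ ^ 2 - ζ ^ 5) * z) +
        ((ζ ^ 4 - ζ ^ 3) * x + (ζ - ζ ^ 6) * y + (ζ ^ 2 - ζ ^ 5) * z) ^ 3 *
          ((ζ - ζ ^ 6) * x + (ζ ^ 2 - ζ ^ 5) * y + (ζ ^ 4 - ζ ^ 3) * z)) * hε4 +
      ((-1)*y^3*z + (-1)*x*z^3 + (-1)*x^3*y + ζ*y^3*z + ζ*x*z^3 + ζ*x^3*y + (1/49)*ζ^4*y*z^3 + (1/49)*ζ^4*x*y^3 + (1/49)*ζ^4*x^3*z + (1/49)*ζ^5*z^4 + (-1/49)*ζ^5*y*z^3 + (1/49)*ζ^5*y^4 + (3/49)*ζ^5*x*y*z^2 + (3/49)*ζ^5*x*y^2*z + (-1/49)*ζ^5*x*y^3 + (3/49)*ζ^5*x^2*y*z + (-1/49)*ζ^5*x^3*z + (1/49)*ζ^5*x^4 + (-1/49)*ζ^6*z^4 + (-3/49)*ζ^6*y^2*z^2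 + (2/49)*ζ^6*y^3*z + (-1/49)*ζ^6*y^4 + (2/49)*ζ^6*x*z^3 + (-3/49)*ζ^6*x^2*z^2 + (-3/49)*ζ^6*x^2*y^2 + (2/49)*ζ^6*x^3*y + (-1/49)*ζ^6*x^4 + (-3/49)*ζ^7*y*z^3 + (6/49)*ζ^7*y^2*z^2 + (-1)*ζ^7*y^3*z + (-1)*ζ^7*x*z^3 + (-9/49)*ζ^7*x*y*z^2 + (-9/49)*ζ^7*x*y^2*z + (-3/49)*ζ^7*x*y^3 + (6/49)*ζ^7*x^2*z^2 + (-9/49)*ζ^7*x^2*y*z + (6/49)*ζ^7*x^2*y^2 + (-3/49)*ζ^7*x^3*z + (-1)*ζ^7*x^3*y + (-1/49)*ζ^8*z^4 + (4/49)*ζ^8*y*z^3 + (-3/49)*ζ^8*y^2*z^2 + (50/49)*ζ^8*y^3*z + (-1/49)*ζ^8*y^4 + (50/49)*ζ^8*x*z^3 + (6/49)*ζ^8*x*y*z^2 + (6/49)*ζ^8*x*y^2*z + (4/49)*ζ^8*x*y^3 + (-3/49)*ζ^8*x^2*z^2 + (6/49)*ζ^8*x^2*y*z + (-3/49)*ζ^8*x^2*y^2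 + (4/49)*ζ^8*x^3*z + (50/49)*ζ^8*x^3*y + (-1/49)*ζ^8*x^4 + (1/49)*ζ^9*y*z^3 + (6/49)*ζ^9*y^2*z^2 + (-15/49)*ζ^9*y^3*z + (-15/49)*ζ^9*x*z^3 + (-3/49)*ζ^9*x*y*z^2 + (-3/49)*ζ^9*x*y^2*z + (1/49)*ζ^9*x*y^3 + (6/49)*ζ^9*x^2*z^2 + (-3/49)*ζ^9*x^2*y*z + (6/49)*ζ^9*x^2*y^2 + (1/49)*ζ^9*x^3*z + (-15/49)*ζ^9*x^3*y + (-2/49)*ζ^10*z^4 + (-5/49)*ζ^10*y*z^3 + (-18/49)*ζ^10*y^2*z^2 + (15/49)*ζ^10*y^3*z + (-2/49)*ζ^10*y^4 + (15/49)*ζ^10*x*z^3 + (-6/49)*ζ^10*x*y*z^2 + (-6/49)*ζ^10*x*y^2*z + (-5/49)*ζ^10*x*y^3 + (-18/49)*ζ^10*x^2*z^2 + (-6/49)*ζ^10*x^2*y*z + (-18/49)*ζ^10*x^2*y^2 + (-5/49)*ζ^10*x^3*z + (15/49)*ζ^10*x^3*y + (-2/49)*ζ^10*x^4 + (6/49)*ζ^11*z^4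 + (6/49)*ζ^11*y*z^3 + (24/49)*ζ^11*y^2*z^2 + (-13/49)*ζ^11*y^3*z + (6/49)*ζ^11*y^4 + (-13/49)*ζ^11*x*z^3 + (18/49)*ζ^11*x*y*z^2 + (18/49)*ζ^11*x*y^2*z + (6/49)*ζ^11*x*y^3 + (24/49)*ζ^11*x^2*z^2 + (18/49)*ζ^11*x^2*y*z + (24/49)*ζ^11*x^2*y^2 + (6/49)*ζ^11*x^3*z + (-13/49)*ζ^11*x^3*y + (6/49)*ζ^11*x^4 + (-2/49)*ζ^12*z^4 + (-5/49)*ζ^12*y*z^3 + (-18/49)*ζ^12*y^2*z^2 + (15/49)*ζ^12*y^3*z + (-2/49)*ζ^12*y^4 + (15/49)*ζ^12*x*z^3 + (-6/49)*ζ^12*x*y*z^2 + (-6/49)*ζ^12*x*y^2*z + (-5/49)*ζ^12*x*y^3 + (-18/49)*ζ^12*x^2*z^2 + (-6/49)*ζ^12*x^2*y*z + (-18/49)*ζ^12*x^2*y^2 + (-5/49)*ζ^12*x^3*z + (15/49)*ζ^12*x^3*y + (-2/49)*ζ^12*x^4 + (1/49)*ζ^13*y*z^3 + (6/49)*ζ^13*y^2*z^2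 + (-15/49)*ζ^13*y^3*z + (-15/49)*ζ^13*x*z^3 + (-3/49)*ζ^13*x*y*z^2 + (-3/49)*ζ^13*x*y^2*z + (1/49)*ζ^13*x*y^3 + (6/49)*ζ^13*x^2*z^2 + (-3/49)*ζ^13*x^2*y*z + (6/49)*ζ^13*x^2*y^2 + (1/49)*ζ^13*x^3*z + (-15/49)*ζ^13*x^3*y + (-1/49)*ζ^14*z^4 + (4/49)*ζ^14*y*z^3 + (-3/49)*ζ^14*y^2*z^2 + (1/49)*ζ^14*y^3*z + (-1/49)*ζ^14*y^4 + (1/49)*ζ^14*x*z^3 + (6/49)*ζ^14*x*y*z^2 + (6/49)*ζ^14*x*y^2*z + (4/49)*ζ^14*x*y^3 + (-3/49)*ζ^14*x^2*z^2 + (6/49)*ζ^14*x^2*y*z + (-3/49)*ζ^14*x^2*y^2 + (4/49)*ζ^14*x^3*z + (1/49)*ζ^14*x^3*y + (-1/49)*ζ^14*x^4 + (-3/49)*ζ^15*y*z^3 + (6/49)*ζ^15*y^2*z^2 + (-9/49)*ζ^15*x*y*z^2 + (-9/49)*ζ^15*x*y^2*z + (-3/49)*ζ^15*x*y^3 + (6/49)*ζ^15*x^2*z^2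 + (-9/49)*ζ^15*x^2*y*z + (6/49)*ζ^15*x^2*y^2 + (-3/49)*ζ^15*x^3*z + (-1/49)*ζ^16*z^4 + (-3/49)*ζ^16*y^2*z^2 + (2/49)*ζ^16*y^3*z + (-1/49)*ζ^16*y^4 + (2/49)*ζ^16*x*z^3 + (-3/49)*ζ^16*x^2*z^2 + (-3/49)*ζ^16*x^2*y^2 + (2/49)*ζ^16*x^3*y + (-1/49)*ζ^16*x^4 + (1/49)*ζ^17*z^4 + (-1/49)*ζ^17*y*z^3 + (1/49)*ζ^17*y^4 + (3/49)*ζ^17*x*y*z^2 + (3/49)*ζ^17*x*y^2*z + (-1/49)*ζ^17*x*y^3 + (3/49)*ζ^17*x^2*y*z + (-1/49)*ζ^17*x^3*z + (1/49)*ζ^17*x^4 + (1/49)*ζ^18*y*z^3 + (1/49)*ζ^18*x*y^3 + (1/49)*ζ^18*x^3*z) * hsum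
  · linear_combination ((ζ ^ 7 + 1) * x ^ 3 * y + y ^ 3 * z + z ^ 3 * x) * h7
end

section
/- Let k be a field of characteristic 0 with i ∈ k (i² = -1) and let ε = (-1+√(-7))/2 ∈ k for a fixed square root of -7. Then the linear substitution x ↦ (x+y)/2, y ↦ (-i x + i y)/2, z ↦ z transforms the quartic F(x,y,z) = x^4 + y^4 + z^4 + 3ε(x²y² + y²z² + z²x²) into a scalar multiple of √(-7)ε²/16·(x^4 + y^4) + z^4 - (3ε²/8)x²y² + 3ε·x y z², i.e., the curves C_{S4}: F = 0 and C_{D4}: √(-7)ε²/16 (x^4+y^4) + z^4 - 3ε²/8 x²y² + 3ε xyz² = 0 are isomorphic via the matrix φ3 = [[1/2,1/2,0],[-i/2,i/2,0],[0,0,1]]. -/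
/-- The substitution `x ↦ (x+y)/2`, `y ↦ (-ix+iy)/2`, `z ↦ z` transforms the
model `C_{S₄}` of the Klein quartic into a scalar multiple of the model
`C_{D₄}`. -/
theorem klein_S4_D4_isomorphism
    (k : Type*) [Field k] [CharZero k]
    (i s ε : k) (hi : i ^ 2 = -1) (hs : s ^ 2 = -7)
    (hε : ε = (-1 + s) / 2) :
    ∃ c : k, c ≠ 0 ∧ ∀ x y z : k,
      ((x + y) / 2) ^ 4 + ((-i * x + i * y) / 2) ^ 4 + z ^ 4 +
        3 * ε * (((x + y) / 2) ^ 2 * ((-i * x + i * y) / 2) ^ 2 +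
          ((-i * x + i * y) / 2) ^ 2 * z ^ 2 + z ^ 2 * ((x + y) / 2) ^ 2) =
      c * (s * ε ^ 2 / 16 * (x ^ 4 + y ^ 4) + z ^ 4 -
        3 * ε ^ 2 / 8 * x ^ 2 * y ^ 2 + 3 * ε * x * y * z ^ 2) := by
  refine ⟨1, one_ne_zero, fun x y z => ?_⟩
  subst hε
  linear_combination ((-3/8:k)*y^2*z^2 + (3/8:k)*y^2*z^2*s + (-5/32:k)*y^4 + (3/32:k)*y^4*s + (1/16:k)*y^4*i^2 + (3/4:k)*x*y*z^2 + (-3/4:k)*x*y*z^2*s + (1/4:k)*x*y^3 + (-1/4:k)*x*y^3*i^2 + (-3/8:k)*x^2*z^2 + (3/8:k)*x^2*z^2*s + (-3/16:k)*x^2*y^2 + (-3/16:k)*x^2*y^2*s + (3/8:k)*x^2*y^2*i^2 + (1/4:k)*x^3*y + (-1/4:k)*x^3*y*i^2 + (-5/32:k)*x^4 + (3/32:k)*x^4*s + (1/16:k)*x^4*i^2) * hi + ((1/32:k)*y^4 + (-1/64:k)*y^4*s + (3/32:k)*x^2*y^2 + (1/32:k)*x^4 + (-1/64:k)*x^4*s)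 * hs
end

section
/- Let k be a field of characteristic 0 and a, m, q1, q3, q4 ∈ k with q1 ≠ 0. Suppose α, β, γ, δ, A, B lie in an algebraic closure with A = α^4, B = αγ^3, A + B = q1, 4Aβ + B(β + 3δ) = 0, 6Aβ² + B(3δ² + 3βδ) = q3, 4Aβ³ + B(δ³ + 3βδ²) = q4, and Aβ⁴ + Bβδ³ = q5. If β ≠ δ, then A = -q1(β+3δ)/(3(β-δ)), B = 4q1β/(3(β-δ)), β(2δ+β) = -q3/(2q1), β(β² + 4βδ + δ²) = -3q4/(4q1), and q3² = -12 q1 q5. -/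
/-- The algebraic consequences of the system of equations arising in the twist
computation for the curve `x⁴ + y⁴ + xz³ = 0` (case X). -/
theorem caseX_twist_system
    (K : Type*) [Field K] [IsAlgClosed K] [CharZero K]
    (q1 q3 q4 q5 α β γ δ A B : K)
    (hq1 : q1 ≠ 0) (hβδ : β ≠ δ)
    (hA : A = α ^ 4) (hB : B = α * γ ^ 3)
    (e1 : A + B = q1)
    (e2 : 4 * A * β + B * (β + 3 * δ) = 0)
    (e3 : 6 * A * β ^ 2 + B * (3 * δ ^ 2 + 3 * β * δ) = q3)
    (e4 : 4 * A * β ^ 3 + B * (δ ^ 3 + 3 * β * δ ^ 2) = q4)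
    (e5 : A * β ^ 4 + B * β * δ ^ 3 = q5) :
    A = -(q1 * (β + 3 * δ)) / (3 * (β - δ)) ∧
    B = 4 * q1 * β / (3 * (β - δ)) ∧
    β * (2 * δ + β) = -q3 / (2 * q1) ∧
    β * (β ^ 2 + 4 * β * δ + δ ^ 2) = -(3 * q4) / (4 * q1) ∧
    q3 ^ 2 = -12 * q1 * q5 := by
  have hd : β - δ ≠ 0 := sub_ne_zero.mpr hβδ
  have hA3 : 3 * A * (β - δ) = -(q1 * (β + 3 * δ)) := by
    linear_combination e2 - (β + 3 * δ) * e1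
  have hB3 : 3 * B * (β - δ) = 4 * q1 * β := by
    linear_combination (4 * β) * e1 - e2
  have h3 : q3 * (β - δ) = (-2 * q1 * β * (β + 2 * δ)) * (β - δ) := by
    linear_combination (-(β - δ)) * e3 + 2 * β ^ 2 * hA3 + (δ ^ 2 + β * δ) * hB3
  have hq3v : q3 = -2 * q1 * β * (β + 2 * δ) := mul_right_cancel₀ hd h3
  have h4 : (3 * q4) * (β - δ) = (-4 * q1 * β * (β ^ 2 + 4 * β * δ + δ ^ 2)) * (β - δ) := by
    linear_combination (-3 * (β - δ)) * e4 + 4 * β ^ 3 * hA3 + (δ ^ 3 + 3 * β * δ ^ 2) * hB3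
  have hq4v : 3 * q4 = -4 * q1 * β * (β ^ 2 + 4 * β * δ + δ ^ 2) := mul_right_cancel₀ hd h4
  have h5 : (3 * q5) * (β - δ) = (-(q1 * β ^ 2 * (β + 2 * δ) ^ 2)) * (β - δ) := by
    linear_combination (-3 * (β - δ)) * e5 + β ^ 4 * hA3 + β * δ ^ 3 * hB3
  have hq5v : 3 * q5 = -(q1 * β ^ 2 * (β + 2 * δ) ^ 2) := mul_right_cancel₀ hd h5
  refine ⟨?_, ?_, ?_, ?_, ?_⟩
  · field_simp
    linear_combination hA3
  · field_simp
    linear_combination hB3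
  · field_simp
    linear_combination hq3v
  · field_simp
    linear_combination hq4v
  · linear_combination (q3 - 2 * q1 * β * (β + 2 * δ)) * hq3v + 4 * q1 * hq5v
end

section
/- Let k be a field of characteristic 0, a ∈ k, and let β be a root of the quartic q1 T^4 + q3 T^2 - q4 T - q3²/(12 q1) = 0 with q1 ≠ 0. Setting δ = -(β² + q3/(2q1))/(2β) (assuming β ≠ 0), A = -q1(β+3δ)/(3(β-δ)), B = 4q1β/(3(β-δ)), and choosing α, γ with α^4 = A, αγ^3 = B, the substitution x ↦ α(x + βz), z ↦ γ(x + δz), y ↦ y transforms x^4 + y^4 + x z^3 into q1 x^4 + q3 x² z² + q4 x z^3 - (q3²/(12 q1)) z^4 + y^4. -/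
/-- The explicit twist computation for case X: the substitution
`x ↦ α(x+βz)`, `z ↦ γ(x+δz)` transforms `x⁴ + y⁴ + xz³` into
`q₁x⁴ + q₃x²z² + q₄xz³ - q₃²/(12q₁)z⁴ + y⁴`. -/
theorem caseX_twist_equation
    (K : Type*) [Field K] [IsAlgClosed K] [CharZero K]
    (q1 q3 q4 β δ A B α γ : K)
    (hq1 : q1 ≠ 0) (hβ0 : β ≠ 0) (hβδ : β ≠ δ)
    (hroot : q1 * β ^ 4 + q3 * β ^ 2 - q4 * β - q3 ^ 2 / (12 * q1) = 0)
    (hδ : δ = -(β ^ 2 + q3 / (2 * q1)) / (2 * β))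
    (hA : A = -(q1 * (β + 3 * δ)) / (3 * (β - δ)))
    (hB : B = 4 * q1 * β / (3 * (β - δ)))
    (hα : α ^ 4 = A) (hαγ : α * γ ^ 3 = B) :
    ∀ x y z : K,
      (α * (x + β * z)) ^ 4 + y ^ 4 +
          (α * (x + β * z)) * (γ * (x + δ * z)) ^ 3 =
        q1 * x ^ 4 + q3 * x ^ 2 * z ^ 2 + q4 * x * z ^ 3 -
          q3 ^ 2 / (12 * q1) * z ^ 4 + y ^ 4 := by
  intro x y z
  have hsub : β - δ ≠ 0 := sub_ne_zero.mpr hβδ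
  have h1 : (α * (x + β * z)) ^ 4 = A * (x + β * z) ^ 4 := by rw [mul_pow, hα]
  have h2 : (α * (x + β * z)) * (γ * (x + δ * z)) ^ 3
      = B * ((x + β * z) * (x + δ * z) ^ 3) := by rw [mul_pow, ← hαγ]; ring
  rw [h1, h2, hA, hB]
  have hq4 : q4 = (q1 * β ^ 4 + q3 * β ^ 2 - q3 ^ 2 / (12 * q1)) / β := by
    rw [eq_div_iff hβ0]
    linear_combination -hroot
  have hq3 : q3 = -2 * q1 * β ^ 2 - 4 * q1 * β * δ := by
    field_simp at hδ
    linear_combination hδ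
  subst hq4 hq3
  field_simp
  ring
end

section
/- Let k be a field of characteristic 0 and m ∈ k, m ≠ 0, with √m a fixed square root in an algebraic closure. The matrix φ = [[2, √m, 0],[-3, 0, √m],[1, -2√m, 3√m]] has nonzero determinant, and for the nontrivial element σ of Gal(k(√m)/k) (when m is a nonsquare), the matrix φ·(σφ)⁻¹ is, up to scalar, an order-2 element of PGL_3(k(√m)). -/
/-- The matrix `φ = [[2,√m,0],[-3,0,√m],[1,-2√m,3√m]]` has nonzero determinant,
and `φ·(σφ)⁻¹` squares to a scalar matrix (where `σ` sends `√m ↦ -√m`). -/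
theorem klein_case2_cocycle
    (K : Type*) [Field K] [CharZero K]
    (m sm : K) (hm : m ≠ 0) (hsm : sm ^ 2 = m) :
    (Matrix.det !![(2 : K), sm, 0; -3, 0, sm; 1, -2 * sm, 3 * sm] ≠ 0) ∧
    (∃ c : K, c ≠ 0 ∧
      (!![(2 : K), sm, 0; -3, 0, sm; 1, -2 * sm, 3 * sm] *
        (!![(2 : K), -sm, 0; -3, 0, -sm; 1, 2 * sm, -3 * sm])⁻¹) *
      (!![(2 : K), sm, 0; -3, 0, sm; 1, -2 * sm, 3 * sm] *
        (!![(2 : K), -sm, 0; -3, 0, -sm; 1, 2 * sm, -3 * sm])⁻¹) =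
      c • (1 : Matrix (Fin 3) (Fin 3) K)) := by
  subst hsm
  have hs : sm ≠ 0 := by
    intro h; apply hm; rw [h]; ring
  constructor
  · rw [Matrix.det_fin_three]
    intro h
    simp at h
    apply hs
    have h14 : (14 : K) * sm ^ 2 = 0 := by linear_combination h
    rcases mul_eq_zero.mp h14 with h' | h'
    · exact absurd h' (by norm_num)
    · exact pow_eq_zero_iff (n := 2) (by norm_num) |>.mp h'
  · refine ⟨1, one_ne_zero, ?_⟩
    have hinv : (!![(2 : K), -sm, 0; -3, 0, -sm; 1, 2 * sm, -3 * sm])⁻¹ =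
        (14 * sm ^ 2)⁻¹ • !![2 * sm ^ 2, -3 * sm ^ 2, sm ^ 2;
          -10 * sm, -6 * sm, 2 * sm; -6 * sm, -5 * sm, -3 * sm] := by
      apply Matrix.inv_eq_right_inv
      rw [Matrix.mul_smul]
      ext i j
      simp only [Matrix.smul_apply, smul_eq_mul]
      fin_cases i <;> fin_cases j <;>
        simp [Matrix.mul_apply, Fin.sum_univ_three, Matrix.one_apply] <;>
        (first | (exact Or.inr (by ring1)) | (field_simp; ring1))
    rw [hinv, Matrix.mul_smul, Matrix.smul_mul, Matrix.mul_smul, smul_smul]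
    ext i j
    simp only [Matrix.smul_apply, smul_eq_mul]
    fin_cases i <;> fin_cases j <;>
      simp [Matrix.mul_apply, Fin.sum_univ_three, Matrix.one_apply] <;>
      (first | (exact Or.inr (by ring1)) | (field_simp; ring1))
end

section
/- Let k be a field of characteristic 0 with i ∉ k and √2 ∈ k, and let γ ∈ k(i) with γ ≠ 0. Suppose L = k(i, ⁸√(-7γ²)) is Galois over k of degree 16 with Galois group generated by σ0: ζ8 ↦ ζ8, ⁸√(-7γ²) ↦ ζ8·⁸√(-7γ²) and σ1: ζ8 ↦ ζ8^ε, ⁸√(-7γ²) ↦ ⁸√(-7γ̄²) (γ̄ the conjugate of γ over k), with relations σ0^8 = σ1^2 = 1 and σ0σ1 = σ1σ0^7. Then one may take γ ∈ k. -/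
/-!
The field `K = k(i)` contains `ζ₈`, since `ζ₈ + ζ₈⁷ = ±√2`, and `L = K(θ)` with `θ⁸ ∈ K`.
Replacing `θ` by `ρθ` for `ρ ∈ Kˣ` does not change `L` and replaces `γ` by `γρ⁴`, so it suffices
to find `ρ` with `γρ⁴` fixed by the conjugation `τ` of `K/k`; fixed up to sign is enough, because
`τ` negates `(1 + ζ₈)⁴`. If `σ₁` fixes `i`, then `γ̄ = ±γ` and `ρ = 1` works. Otherwise `σ₁` acts
on `K` as `τ`; the relation `σ₀σ₁ = σ₁σ₀⁷` makes `μ = σ₁θ/θ` fixed by `σ₀`, hence `μ ∈ K`,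
`σ₁² = 1` gives `μ τ(μ) = 1`, and Hilbert 90 writes `μ = ν/τ(ν)`. As `μ⁴γ = ±γ̄`, `ρ = ν` works.
-/

open IntermediateField Polynomial Finset

section

variable {F E : Type*} [Field F] [Field E] [Algebra F E]

theorem exists_eq_sum_pow_of_mem_adjoin_simple {α : E} {n : ℕ} {c : F} (hn : n ≠ 0)
    (hα : α ^ n = algebraMap F E c) {x : E} (hx : x ∈ F⟮α⟯) :
    ∃ a : ℕ → F, x = ∑ i ∈ range n, a i • α ^ i := by
  have hmonic : (X ^ n - C c : F[X]).Monic := monic_X_pow_sub_C c hn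
  have hroot : aeval α (X ^ n - C c) = 0 := by simp [hα]
  rw [← mem_toSubalgebra, adjoin_simple_toSubalgebra_of_isAlgebraic ⟨_, hmonic.ne_zero, hroot⟩,
    Algebra.adjoin_singleton_eq_range_aeval] at hx
  obtain ⟨p, rfl⟩ := hx
  refine ⟨(p %ₘ (X ^ n - C c)).coeff, ?_⟩
  have hdeg : (p %ₘ (X ^ n - C c)).natDegree < n := by
    simpa [natDegree_X_pow_sub_C] using natDegree_modByMonic_lt p hmonic
      (fun h => hn (by simpa [natDegree_X_pow_sub_C] using congrArg natDegree h))
  rw [← aeval_eq_sum_range' hdeg α, aeval_modByMonic_eq_self_of_root hroot]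
  rfl

theorem mem_of_map_eq_self_of_mem_adjoin_simple {K : IntermediateField F E} {σ : E ≃ₐ[F] E}
    (hσK : ∀ x ∈ K, σ x = x) {ζ θ : E} {n : ℕ} [NeZero n] (hζ : IsPrimitiveRoot ζ n)
    (hσζ : σ ζ = ζ) (hσθ : σ θ = ζ * θ) (hθn : θ ^ n ∈ K) {x : E} (hx : x ∈ K⟮θ⟯)
    (hσx : σ x = x) : x ∈ K := by
  obtain ⟨a, rfl⟩ :=
    exists_eq_sum_pow_of_mem_adjoin_simple (c := ⟨θ ^ n, hθn⟩) (NeZero.ne n) rfl hx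
  simp only [Algebra.smul_def, IntermediateField.algebraMap_apply] at hσx ⊢
  have hconj : ∀ m : ℕ, ∑ i ∈ range n, (a i : E) * θ ^ i
      = ∑ i ∈ range n, (a i : E) * (ζ ^ i) ^ m * θ ^ i := by
    intro m
    induction m with
    | zero => simp
    | succ m ih =>
      conv_lhs => rw [← hσx, ih]
      simp only [map_sum, map_mul, map_pow, hσK _ (a _).2, hσζ, hσθ]
      exact sum_congr rfl fun i _ => by ring
  have hgeom : ∀ i ∈ range n, i ≠ 0 → ∑ m ∈ range n, (ζ ^ i) ^ m = 0 := fun i hi hi0 => by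
    rw [geom_sum_eq (hζ.pow_ne_one_of_pos_of_lt hi0 (mem_range.mp hi)), ← pow_mul, mul_comm,
      pow_mul, hζ.pow_eq_one, one_pow, sub_self, zero_div]
  -- averaging over the powers of `σ` keeps only the constant coefficient
  have hn : (n : E) ≠ 0 := (hζ.neZero').out
  have key : (n : E) * ∑ i ∈ range n, (a i : E) * θ ^ i = n * a 0 := calc
    _ = ∑ m ∈ range n, ∑ i ∈ range n, (a i : E) * (ζ ^ i) ^ m * θ ^ i := by
      simp only [← hconj, sum_const, card_range, nsmul_eq_mul]
    _ = ∑ i ∈ range n, (a i : E) * (∑ m ∈ range n, (ζ ^ i) ^ m) * θ ^ i := by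
      rw [sum_comm]; simp only [mul_sum, sum_mul]
    _ = n * a 0 := by
      rw [sum_eq_single_of_mem 0 (mem_range.mpr (Nat.pos_of_neZero n))
        fun i hi hi0 => by rw [hgeom i hi hi0, mul_zero, zero_mul]]
      simp [mul_comm]
  rw [mul_left_cancel₀ hn key]
  exact (a 0).2

theorem adjoin_pair_mul_right_eq {ι θ ρ : E} (hρ : ρ ∈ F⟮ι⟯) (hρ0 : ρ ≠ 0) :
    F⟮ι, ρ * θ⟯ = F⟮ι, θ⟯ := by
  rw [← adjoin_simple_adjoin_simple, ← adjoin_simple_adjoin_simple]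
  congr 1
  have hρ' : ρ = algebraMap F⟮ι⟯ E ⟨ρ, hρ⟩ := rfl
  apply le_antisymm <;> rw [adjoin_simple_le_iff]
  · rw [hρ']
    exact mul_mem (IntermediateField.algebraMap_mem _ _) (mem_adjoin_simple_self _ θ)
  · have h := mul_mem (inv_mem (IntermediateField.algebraMap_mem F⟮ι⟯⟮ρ * θ⟯ ⟨ρ, hρ⟩))
      (mem_adjoin_simple_self F⟮ι⟯ (ρ * θ))
    rwa [← hρ', inv_mul_cancel_left₀ hρ0] at h

theorem exists_eq_add_mul_of_mem_adjoin {ι : E} (hι : ι ^ 2 = -1) {x : E} (hx : x ∈ F⟮ι⟯) :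
    ∃ a b : F, x = algebraMap F E a + algebraMap F E b * ι := by
  obtain ⟨a, rfl⟩ := exists_eq_sum_pow_of_mem_adjoin_simple (c := -1) two_ne_zero
    (by rw [hι, map_neg, map_one]) hx
  exact ⟨a 0, a 1, by simp [sum_range_succ, Algebra.smul_def]⟩

theorem map_eq_map_of_mem_adjoin {ι : E} (hι : ι ^ 2 = -1) {ψ₁ ψ₂ : E ≃ₐ[F] E}
    (h : ψ₁ ι = ψ₂ ι) {x : E} (hx : x ∈ F⟮ι⟯) : ψ₁ x = ψ₂ x := by
  obtain ⟨a, b, rfl⟩ := exists_eq_add_mul_of_mem_adjoin hι hx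
  simp [h]

theorem map_eq_self_of_mem_adjoin {ι : E} (hι : ι ^ 2 = -1) {ψ : E ≃ₐ[F] E} (h : ψ ι = ι)
    {x : E} (hx : x ∈ F⟮ι⟯) : ψ x = x := by
  obtain ⟨a, b, rfl⟩ := exists_eq_add_mul_of_mem_adjoin hι hx
  simp [h]

theorem exists_eq_algebraMap_of_map_eq_self [NeZero (2 : E)] {ι : E} (hι : ι ^ 2 = -1)
    {τ : E ≃ₐ[F] E} (hτ : τ ι = -ι) {x : E} (hx : x ∈ F⟮ι⟯) (hτx : τ x = x) :
    ∃ a : F, x = algebraMap F E a := by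
  obtain ⟨a, b, rfl⟩ := exists_eq_add_mul_of_mem_adjoin hι hx
  have hι0 : ι ≠ 0 := by rintro rfl; norm_num at hι
  have h : 2 * algebraMap F E b * ι = 0 := by
    simp only [map_add, map_mul, AlgEquiv.commutes, hτ] at hτx
    linear_combination -hτx
  have hb := (mul_eq_zero.1 ((mul_eq_zero.1 h).resolve_right hι0)).resolve_left two_ne_zero
  exact ⟨a, by rw [hb, zero_mul, add_zero]⟩

theorem exists_mul_map_eq_of_map_mul_eq_one {ι : E} (hι : ι ^ 2 = -1) {τ : E ≃ₐ[F] E}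
    (hτ : τ ι = -ι) {μ : E} (hμ : μ ∈ F⟮ι⟯) (hτμ : τ μ * μ = 1) :
    ∃ ν ∈ F⟮ι⟯, ν ≠ 0 ∧ μ * τ ν = ν := by
  -- Hilbert 90 for `F⟮ι⟯/F`
  by_cases hμ1 : μ = -1
  · refine ⟨ι, mem_adjoin_simple_self F ι, by rintro rfl; norm_num at hι, ?_⟩
    rw [hτ, hμ1]; ring
  · refine ⟨1 + μ, add_mem (one_mem _) hμ, fun h => hμ1 (by linear_combination h), ?_⟩
    rw [map_add, map_one]; linear_combination hτμ

end

namespace IsPrimitiveRoot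

variable {F E : Type*} [Field F] [Field E] [Algebra F E] {ζ ι : E}

theorem pow_four_eq_neg_one (hζ : IsPrimitiveRoot ζ 8) : ζ ^ 4 = -1 :=
  (hζ.pow_of_dvd (p := 4) four_ne_zero (by norm_num)).eq_neg_one_of_two_right

theorem add_pow_seven_sq (hζ : IsPrimitiveRoot ζ 8) : (ζ + ζ ^ 7) ^ 2 = 2 := by
  linear_combination (2 * (ζ ^ 4 - 1) + ζ ^ 2 * (ζ ^ 8 - ζ ^ 4 + 1)) * hζ.pow_four_eq_neg_one

theorem sq_eq_or_eq_neg (hζ : IsPrimitiveRoot ζ 8) {ι : E} (hι : ι ^ 2 = -1) :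
    ζ ^ 2 = ι ∨ ζ ^ 2 = -ι :=
  sq_eq_sq_iff_eq_or_eq_neg.1 (by rw [hι, ← pow_mul, hζ.pow_four_eq_neg_one])

theorem one_add_ne_zero (hζ : IsPrimitiveRoot ζ 8) : 1 + ζ ≠ 0 := fun h =>
  hζ.pow_ne_one_of_pos_of_lt two_ne_zero (by norm_num) (by rw [eq_neg_of_add_eq_zero_right h]; ring)

theorem map_one_add_pow_four (hζ : IsPrimitiveRoot ζ 8)
    {ψ : E ≃ₐ[F] E} (hψ : ψ ζ = ζ ^ 7) : ψ ((1 + ζ) ^ 4) = -(1 + ζ) ^ 4 := by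
  have h : 1 + ζ ^ 7 = ζ ^ 7 * (1 + ζ) := by linear_combination -hζ.pow_eq_one
  rw [map_pow, map_add, map_one, hψ, h, mul_pow, ← pow_mul, show 7 * 4 = 4 * 7 from rfl, pow_mul,
    hζ.pow_four_eq_neg_one]
  ring

theorem add_pow_seven_mem_bot (hζ : IsPrimitiveRoot ζ 8) {s : F} (hs : s ^ 2 = 2) :
    ζ + ζ ^ 7 ∈ (⊥ : IntermediateField F E) := by
  rcases sq_eq_sq_iff_eq_or_eq_neg.1 (hζ.add_pow_seven_sq.trans (by rw [← map_pow, hs, map_ofNat]) :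
    (ζ + ζ ^ 7) ^ 2 = algebraMap F E s ^ 2) with h | h <;> rw [h]
  · exact IntermediateField.algebraMap_mem _ s
  · exact neg_mem (IntermediateField.algebraMap_mem _ s)

theorem mul_add_pow_seven (hζ : IsPrimitiveRoot ζ 8) : ζ * (ζ + ζ ^ 7) = 1 + ζ ^ 2 := by
  linear_combination hζ.pow_eq_one

theorem add_pow_seven_ne_zero (hζ : IsPrimitiveRoot ζ 8) : ζ + ζ ^ 7 ≠ 0 := fun h => by
  have h2 : (2 : E) = 0 := by simpa [h] using hζ.add_pow_seven_sq.symm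
  exact hζ.neZero'.out (by rw [show ((8 : ℕ) : E) = 2 * 2 * 2 by norm_num, h2, zero_mul, zero_mul])

theorem mem_adjoin (hζ : IsPrimitiveRoot ζ 8) {s : F} (hs : s ^ 2 = 2) (hι : ι ^ 2 = -1) :
    ζ ∈ F⟮ι⟯ := by
  rw [eq_div_of_mul_eq hζ.add_pow_seven_ne_zero hζ.mul_add_pow_seven]
  refine div_mem (add_mem (one_mem _) ?_) ((bot_le : ⊥ ≤ F⟮ι⟯) (hζ.add_pow_seven_mem_bot hs))
  rcases hζ.sq_eq_or_eq_neg hι with h | h <;> rw [h]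
  · exact mem_adjoin_simple_self F ι
  · exact neg_mem (mem_adjoin_simple_self F ι)

theorem map_eq_pow_seven (hζ : IsPrimitiveRoot ζ 8) {s : F} (hs : s ^ 2 = 2) (hι : ι ^ 2 = -1)
    {ψ : E ≃ₐ[F] E} (hψ : ψ ι = -ι) : ψ ζ = ζ ^ 7 := by
  obtain ⟨a, ha⟩ := mem_bot.1 (hζ.add_pow_seven_mem_bot hs)
  have hψS : ψ (ζ + ζ ^ 7) = ζ + ζ ^ 7 := by rw [← ha, AlgEquiv.commutes]
  have hψζ2 : ψ (ζ ^ 2) = -ζ ^ 2 := by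
    rcases hζ.sq_eq_or_eq_neg hι with h | h <;> simp [h, hψ]
  refine mul_right_cancel₀ hζ.add_pow_seven_ne_zero ?_
  calc ψ ζ * (ζ + ζ ^ 7) = ψ (ζ * (ζ + ζ ^ 7)) := by rw [map_mul, hψS]
    _ = ζ ^ 7 * (ζ + ζ ^ 7) := by
      rw [hζ.mul_add_pow_seven, map_add, map_one, hψζ2]
      linear_combination -hζ.pow_eq_one - ζ ^ 2 * (ζ ^ 8 - ζ ^ 4 + 1) * hζ.pow_four_eq_neg_one

theorem map_eq_self_of_sq_eq_neg_one (hζ : IsPrimitiveRoot ζ 8) (hι : ι ^ 2 = -1)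
    {ψ : E ≃ₐ[F] E} (hψ : ψ ζ = ζ) : ψ ι = ι := by
  rcases hζ.sq_eq_or_eq_neg hι with h | h
  · rw [← h, map_pow, hψ]
  · rw [← neg_neg ι, ← h, map_neg, map_pow, hψ]

end IsPrimitiveRoot

section

variable {F E : Type*} [Field F] [Field E] [Algebra F E] {ι θ γ c : E}

theorem exists_adjoin_eq_of_map_mul_pow_four_eq_self [NeZero (2 : E)] (hι : ι ^ 2 = -1)
    {τ : E ≃ₐ[F] E} (hτ : τ ι = -ι) (hγ : γ ∈ F⟮ι⟯) (hθ : θ ^ 8 = c * γ ^ 2) {ρ : E}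
    (hρ : ρ ∈ F⟮ι⟯) (hρ0 : ρ ≠ 0) (hτρ : τ (γ * ρ ^ 4) = γ * ρ ^ 4) :
    ∃ (γ' : F) (θ' : E), θ' ^ 8 = c * algebraMap F E γ' ^ 2 ∧ F⟮ι, θ⟯ = F⟮ι, θ'⟯ := by
  obtain ⟨γ', hγ'⟩ := exists_eq_algebraMap_of_map_eq_self hι hτ (mul_mem hγ (pow_mem hρ 4)) hτρ
  refine ⟨γ', ρ * θ, ?_, (adjoin_pair_mul_right_eq hρ hρ0).symm⟩
  rw [← hγ', mul_pow, hθ]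
  ring

theorem exists_adjoin_eq_of_map_mul_pow_four_eq_or_eq_neg [NeZero (2 : E)] {s : F}
    (hs : s ^ 2 = 2) {ζ : E} (hζ : IsPrimitiveRoot ζ 8) (hι : ι ^ 2 = -1) {τ : E ≃ₐ[F] E}
    (hτ : τ ι = -ι) (hγ : γ ∈ F⟮ι⟯) (hθ : θ ^ 8 = c * γ ^ 2) {ρ : E} (hρ : ρ ∈ F⟮ι⟯)
    (hρ0 : ρ ≠ 0) (hτρ : τ (γ * ρ ^ 4) = γ * ρ ^ 4 ∨ τ (γ * ρ ^ 4) = -(γ * ρ ^ 4)) :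
    ∃ (γ' : F) (θ' : E), θ' ^ 8 = c * algebraMap F E γ' ^ 2 ∧ F⟮ι, θ⟯ = F⟮ι, θ'⟯ := by
  rcases hτρ with hτρ | hτρ
  · exact exists_adjoin_eq_of_map_mul_pow_four_eq_self hι hτ hγ hθ hρ hρ0 hτρ
  · refine exists_adjoin_eq_of_map_mul_pow_four_eq_self hι hτ hγ hθ
      (mul_mem (add_mem (one_mem _) (hζ.mem_adjoin hs hι)) hρ)
      (mul_ne_zero hζ.one_add_ne_zero hρ0) ?_
    have h := hζ.map_one_add_pow_four (hζ.map_eq_pow_seven hs hι hτ)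
    calc τ (γ * ((1 + ζ) * ρ) ^ 4) = τ ((1 + ζ) ^ 4) * τ (γ * ρ ^ 4) := by
          rw [← map_mul]; ring_nf
      _ = γ * ((1 + ζ) * ρ) ^ 4 := by rw [h, hτρ]; ring

theorem eq_or_eq_neg_of_map_pow_eight_eq (hι : ι ^ 2 = -1) {σ : E ≃ₐ[F] E} (hσι : σ ι = ι)
    (hγ : γ ∈ F⟮ι⟯) (hc : c ≠ 0) (hσc : σ c = c) (hθ : θ ^ 8 = c * γ ^ 2) {γb : E}
    (hσθ : σ θ ^ 8 = c * γb ^ 2) : γb = γ ∨ γb = -γ := by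
  refine sq_eq_sq_iff_eq_or_eq_neg.1 (mul_left_cancel₀ hc ?_)
  rw [← hσθ, ← map_pow, hθ, map_mul, map_pow, hσc, map_eq_self_of_mem_adjoin hι hσι hγ]

variable {ζ : E} {σ₀ σ₁ : E ≃ₐ[F] E}

theorem map_div_self_mem_adjoin {s : F} (hs : s ^ 2 = 2) (hζ : IsPrimitiveRoot ζ 8)
    (hι : ι ^ 2 = -1) (hθ : θ ^ 8 ∈ F⟮ι⟯) (hσ₀ι : σ₀ ι = ι) (hσ₀ζ : σ₀ ζ = ζ)
    (hσ₀θ : σ₀ θ = ζ * θ) (hσ₁ι : σ₁ ι = -ι) (hσ₁θ : σ₁ θ ∈ F⟮ι, θ⟯)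
    (hrel : σ₀ (σ₁ θ) = σ₁ ((σ₀ ^ 7) θ)) : σ₁ θ / θ ∈ F⟮ι⟯ := by
  have hσ₀σ₁θ : σ₀ (σ₁ θ) = ζ * σ₁ θ := by
    have h : (σ₀ ^ 7) θ = ζ ^ 7 * θ := by
      simp only [pow_succ, pow_zero, one_mul, AlgEquiv.mul_apply, map_mul, hσ₀ζ, hσ₀θ]; ring
    rw [hrel, h, map_mul, map_pow, hζ.map_eq_pow_seven hs hι hσ₁ι, ← pow_mul,
      show 7 * 7 = 8 * 6 + 1 from rfl, pow_succ, pow_mul, hζ.pow_eq_one, one_pow, one_mul]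
  rw [← adjoin_simple_adjoin_simple, mem_restrictScalars] at hσ₁θ
  refine mem_of_map_eq_self_of_mem_adjoin_simple (fun _ => map_eq_self_of_mem_adjoin hι hσ₀ι)
    hζ hσ₀ζ hσ₀θ hθ (div_mem hσ₁θ (mem_adjoin_simple_self _ θ)) ?_
  rw [map_div₀, hσ₀σ₁θ, hσ₀θ, mul_div_mul_left _ _ (hζ.ne_zero (by norm_num))]

theorem exists_map_mul_pow_four_eq_or_eq_neg {s : F} (hs : s ^ 2 = 2) (hζ : IsPrimitiveRoot ζ 8)
    (hι : ι ^ 2 = -1) {τ : E ≃ₐ[F] E} (hτ : τ ι = -ι) (hγ0 : γ ≠ 0)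
    (hc : c ≠ 0) (hθ : θ ^ 8 = c * γ ^ 2) (hθK : θ ^ 8 ∈ F⟮ι⟯) (hσ₀ι : σ₀ ι = ι)
    (hσ₀ζ : σ₀ ζ = ζ) (hσ₀θ : σ₀ θ = ζ * θ) (hσ₁ι : σ₁ ι = -ι)
    (hσ₁θ : σ₁ θ ^ 8 = c * τ γ ^ 2) (hσ₁θL : σ₁ θ ∈ F⟮ι, θ⟯) (hσ₁σ₁θ : σ₁ (σ₁ θ) = θ)
    (hrel : σ₀ (σ₁ θ) = σ₁ ((σ₀ ^ 7) θ)) :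
    ∃ ρ ∈ F⟮ι⟯, ρ ≠ 0 ∧ (τ (γ * ρ ^ 4) = γ * ρ ^ 4 ∨ τ (γ * ρ ^ 4) = -(γ * ρ ^ 4)) := by
  have hθ0 : θ ≠ 0 := by rintro rfl; simp [hc, hγ0] at hθ
  set μ := σ₁ θ / θ with hμ_def
  have hμ : μ ∈ F⟮ι⟯ :=
    map_div_self_mem_adjoin hs hζ hι hθK hσ₀ι hσ₀ζ hσ₀θ hσ₁ι hσ₁θL hrel
  have hσ₁θ0 : σ₁ θ ≠ 0 := (map_ne_zero σ₁).2 hθ0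
  have hτμ : τ μ * μ = 1 := by
    rw [← map_eq_map_of_mem_adjoin hι (hσ₁ι.trans hτ.symm) hμ, hμ_def, map_div₀, hσ₁σ₁θ]
    field_simp
  have hμ4 : (μ ^ 4 * γ) ^ 2 = τ γ ^ 2 := by
    rw [← div_mul_cancel₀ (σ₁ θ) hθ0, mul_pow, hθ] at hσ₁θ
    exact mul_left_cancel₀ hc (by linear_combination hσ₁θ)
  obtain ⟨ν, hν, hν0, hμν⟩ := exists_mul_map_eq_of_map_mul_eq_one hι hτ hμ hτμ
  refine ⟨ν, hν, hν0, ?_⟩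
  have hγν : γ * ν ^ 4 = μ ^ 4 * γ * τ ν ^ 4 := by
    conv_lhs => rw [← hμν]
    ring
  rw [map_mul, map_pow, hγν]
  rcases sq_eq_sq_iff_eq_or_eq_neg.1 hμ4 with h | h <;> rw [h]
  · exact Or.inl rfl
  · exact Or.inr (by ring)

end

theorem klein_embedding_problem_16_7_general
    (k : Type*) [Field k] [CharZero k]
    (h2k : ∃ s : k, s ^ 2 = 2)
    (ι ζ8 θ γ γb : AlgebraicClosure k)
    (hι : ι ^ 2 = -1)
    (hζ8 : IsPrimitiveRoot ζ8 8)
    (hγ : γ ∈ IntermediateField.adjoin k {ι}) (hγ0 : γ ≠ 0)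
    (hγb : ∃ τ : AlgebraicClosure k ≃ₐ[k] AlgebraicClosure k,
      τ ι = -ι ∧ τ γ = γb)
    (hθ : θ ^ 8 = -7 * γ ^ 2)
    (L : IntermediateField k (AlgebraicClosure k))
    (hL : L = IntermediateField.adjoin k {ι, θ})
    (hGal : IsGalois k L)
    (σ0 σ1 : AlgebraicClosure k ≃ₐ[k] AlgebraicClosure k)
    (hσ0ζ : σ0 ζ8 = ζ8)
    (hσ0θ : σ0 θ = ζ8 * θ)
    (hσ1θ : (σ1 θ) ^ 8 = -7 * γb ^ 2)
    (hord1 : ∀ x ∈ L, (σ1 ^ 2) x = x)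
    (hrel : ∀ x ∈ L, (σ0 * σ1) x = (σ1 * σ0 ^ 7) x) :
    ∃ (γ' : k) (θ' : AlgebraicClosure k),
      θ' ^ 8 = -7 * (algebraMap k (AlgebraicClosure k) γ') ^ 2 ∧
      L = IntermediateField.adjoin k {ι, θ'} := by
  obtain ⟨s, hs⟩ := h2k
  obtain ⟨τ, hτι, rfl⟩ := hγb
  have hθL : θ ∈ L := hL ▸ subset_adjoin k _ (by simp)
  have hσ₁θL : σ1 θ ∈ L := normal_iff_forall_map_le'.1 hGal.to_normal σ1 ⟨θ, hθL, rfl⟩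
  subst hL
  have hc : (-7 : AlgebraicClosure k) ≠ 0 := by norm_num
  have hσ₀ι := hζ8.map_eq_self_of_sq_eq_neg_one hι hσ0ζ
  obtain ⟨ρ, hρ, hρ0, hτρ⟩ :
      ∃ ρ ∈ k⟮ι⟯, ρ ≠ 0 ∧ (τ (γ * ρ ^ 4) = γ * ρ ^ 4 ∨ τ (γ * ρ ^ 4) = -(γ * ρ ^ 4)) := by
    rcases sq_eq_sq_iff_eq_or_eq_neg.1 (show σ1 ι ^ 2 = ι ^ 2 by rw [← map_pow, hι]; simp)
      with hσ₁ι | hσ₁ι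
    · refine ⟨1, one_mem _, one_ne_zero, ?_⟩
      simpa using eq_or_eq_neg_of_map_pow_eight_eq hι hσ₁ι hγ hc
        (by rw [map_neg, map_ofNat]) hθ hσ1θ
    · exact exists_map_mul_pow_four_eq_or_eq_neg hs hζ8 hι hτι hγ0 hc hθ
        (hθ ▸ mul_mem (by simp) (pow_mem hγ 2)) hσ₀ι hσ0ζ hσ0θ hσ₁ι hσ1θ hσ₁θL
        (by rw [← AlgEquiv.mul_apply, ← sq]; exact hord1 θ hθL)
        (hrel θ hθL)
  exact exists_adjoin_eq_of_map_mul_pow_four_eq_or_eq_neg hs hζ8 hι hτι hγ hθ hρ hρ0 hτρ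

/-- Lemma on the embedding problem for the pair `(<16,7>,<8,3>)` for twists of
the Klein quartic: if `i ∉ k`, `√2 ∈ k`, `γ ∈ k(i)` is nonzero and
`L = k(i, ⁸√(-7γ²))` is Galois of degree 16 over `k` with Galois group
generated by `σ₀ : ζ₈ ↦ ζ₈, θ ↦ ζ₈θ` and `σ₁ : ζ₈ ↦ ζ₈^e, θ ↦ ⁸√(-7γ̄²)`
satisfying `σ₀⁸ = σ₁² = 1` and `σ₀σ₁ = σ₁σ₀⁷`, then one may take `γ ∈ k`:
`L = k(i, ⁸√(-7γ'²))` for some `γ'` in `k`. -/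
theorem klein_embedding_problem_16_7
    (k : Type*) [Field k] [CharZero k]
    (hik : ¬ ∃ x : k, x ^ 2 = -1)
    (h2k : ∃ s : k, s ^ 2 = 2)
    (ι ζ8 θ γ γb : AlgebraicClosure k)
    (hι : ι ^ 2 = -1)
    (hζ8 : IsPrimitiveRoot ζ8 8)
    (hγ : γ ∈ IntermediateField.adjoin k {ι}) (hγ0 : γ ≠ 0)
    (hγb : ∃ τ : AlgebraicClosure k ≃ₐ[k] AlgebraicClosure k,
      τ ι = -ι ∧ τ γ = γb)
    (hθ : θ ^ 8 = -7 * γ ^ 2)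
    (L : IntermediateField k (AlgebraicClosure k))
    (hL : L = IntermediateField.adjoin k {ι, θ})
    (hGal : IsGalois k L)
    (hdeg : Module.finrank k L = 16)
    (σ0 σ1 : AlgebraicClosure k ≃ₐ[k] AlgebraicClosure k)
    (hσ0ζ : σ0 ζ8 = ζ8)
    (hσ0θ : σ0 θ = ζ8 * θ)
    (hσ1ζ : ∃ e : ℕ, σ1 ζ8 = ζ8 ^ e)
    (hσ1θ : (σ1 θ) ^ 8 = -7 * γb ^ 2)
    (hord0 : ∀ x ∈ L, (σ0 ^ 8) x = x)
    (hord1 : ∀ x ∈ L, (σ1 ^ 2) x = x)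
    (hrel : ∀ x ∈ L, (σ0 * σ1) x = (σ1 * σ0 ^ 7) x) :
    ∃ (γ' : k) (θ' : AlgebraicClosure k),
      θ' ^ 8 = -7 * (algebraMap k (AlgebraicClosure k) γ') ^ 2 ∧
      L = IntermediateField.adjoin k {ι, θ'} :=
  klein_embedding_problem_16_7_general k h2k ι ζ8 θ γ γb hι hζ8 hγ hγ0 hγb hθ L hL hGal σ0 σ1 hσ0ζ
    hσ0θ hσ1θ hord1 hrel
end
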